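/- arXiv:2205.03170 — 2 statements merged into one kernel-verified Lean document; each statement's English description precedes it below -/
import Mathlib

section
/- If a live NFA G (with no unobservable cycles) has an s-revealing sequence λ_s ∈ L(G), then the diagnoser G_d contains a secret cycle, i.e., a set of diagnoser states {x_{d1}, …, x_{dn+1}} with x_{dn+1} = x_{d1}, all of which are secret states, connected by transitions of G_d. -/
variable {X E : Type}

def nstep (f : X → E → Set X) (S : Set X) (a : E) : Set X :=
  {y | ∃ x ∈ S, y ∈ f x a}

def nsteps (f : X → E → Set X) (S : Set X) (w : List E) : Set X :=
  w.foldl (nstep f) S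

def lang (f : X → E → Set X) (x0 : X) : Set (List E) :=
  {w | (nsteps f {x0} w).Nonempty}

def proj (obs : E → Bool) (w : List E) : List E := w.filter obs

def sRevealing (f : X → E → Set X) (obs : E → Bool) (s : E) (x0 : X) (lam : List E) : Prop :=
  lam ∈ lang f x0 ∧ s ∈ lam ∧ ∀ lam' ∈ lang f x0, proj obs lam' = proj obs lam → s ∈ lam'

def CEnforceable (f : X → E → Set X) (obs : E → Bool) (s : E) (x0 : X)
    (Dstar : List E → Set (List E)) : Prop :=
  (∀ lam ∈ lang f x0, (Dstar (proj obs lam)).Nonempty) ∧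
  ∀ lam, sRevealing f obs s x0 lam →
    ∃ u ∈ lang f x0, s ∉ u ∧ proj obs u ∈ Dstar (proj obs lam) ∧
      ∀ lam', lam ++ lam' ∈ lang f x0 →
        ∃ u' ∈ lang f x0, s ∉ u' ∧ proj obs u' ∈ Dstar (proj obs (lam ++ lam')) ∧
          proj obs u <+: proj obs u'

def dstep [DecidableEq E] (f : X → E → Set X) (obs : E → Bool) (s : E)
    (q : Set (X × Bool)) (e : E) : Set (X × Bool) :=
  {p | ∃ xl ∈ q, ∃ w : List E,
    proj obs w = [e] ∧ p.1 ∈ nsteps f {xl.1} w ∧ p.2 = (xl.2 || decide (s ∈ w))}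

def dinit [DecidableEq E] (f : X → E → Set X) (obs : E → Bool) (s : E) (x0 : X) :
    Set (X × Bool) :=
  {p | ∃ w : List E, proj obs w = [] ∧ p.1 ∈ nsteps f {x0} w ∧ p.2 = decide (s ∈ w)}

def druns [DecidableEq E] (f : X → E → Set X) (obs : E → Bool) (s : E)
    (q : Set (X × Bool)) (ω : List E) : Set (X × Bool) :=
  ω.foldl (dstep f obs s) q

-- aux lemmas

lemma nsteps_append (f : X → E → Set X) (S : Set X) (u v : List E) :
    nsteps f S (u ++ v) = nsteps f (nsteps f S u) v := List.foldl_append ..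

lemma nsteps_mono (f : X → E → Set X) :
    ∀ (w : List E) {S T : Set X}, S ⊆ T → nsteps f S w ⊆ nsteps f T w := by
  intro w
  induction w with
  | nil => intro S T h; exact h
  | cons a w ih =>
      intro S T h
      have : nstep f S a ⊆ nstep f T a := by
        rintro y ⟨x, hx, hy⟩; exact ⟨x, h hx, hy⟩
      exact ih this

lemma mem_nsteps_iff (f : X → E → Set X) :
    ∀ (w : List E) (S : Set X) (y : X),
      y ∈ nsteps f S w ↔ ∃ x ∈ S, y ∈ nsteps f {x} w := by
  intro w
  induction w with
  | nil => intro S y; simp [nsteps]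
  | cons a w ih =>
      intro S y
      constructor
      · intro hy
        have : y ∈ nsteps f (nstep f S a) w := hy
        obtain ⟨x', hx', hy'⟩ := (ih (nstep f S a) y).mp this
        obtain ⟨x, hx, hfx⟩ := hx'
        refine ⟨x, hx, ?_⟩
        show y ∈ nsteps f (nstep f {x} a) w
        exact nsteps_mono f w (by rintro z hz; rcases hz with rfl|h; exact ⟨x, rfl, hfx⟩) hy'
      · rintro ⟨x, hx, hy⟩
        have hy' : y ∈ nsteps f (nstep f {x} a) w := hy
        obtain ⟨x', hx', hy''⟩ := (ih (nstep f {x} a) y).mp hy'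
        have : x' ∈ nstep f S a := by
          obtain ⟨z, hz, hfz⟩ := hx'
          rcases hz with rfl
          exact ⟨z, hx, hfz⟩
        show y ∈ nsteps f (nstep f S a) w
        exact (ih (nstep f S a) y).mpr ⟨x', this, hy''⟩

lemma filter_split (pr : E → Bool) :
    ∀ (w l1 l2 : List E), w.filter pr = l1 ++ l2 →
      ∃ w1 w2, w = w1 ++ w2 ∧ w1.filter pr = l1 ∧ w2.filter pr = l2 := by
  intro w
  induction w with
  | nil =>
      intro l1 l2 h
      simp only [List.filter_nil] at h
      obtain ⟨h1, h2⟩ := List.append_eq_nil_iff.mp h.symm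
      exact ⟨[], [], rfl, by simp [h1], by simp [h2]⟩
  | cons a w ih =>
      intro l1 l2 h
      by_cases ha : pr a = true
      · rw [List.filter_cons_of_pos ha] at h
        cases l1 with
        | nil =>
            exact ⟨[], a :: w, rfl, rfl, by rw [List.filter_cons_of_pos ha]; simpa using h⟩
        | cons b l1' =>
            simp only [List.cons_append, List.cons.injEq] at h
            obtain ⟨rfl, h2⟩ := h
            obtain ⟨w1, w2, rfl, hw1, hw2⟩ := ih l1' l2 h2
            exact ⟨a :: w1, w2, rfl, by rw [List.filter_cons_of_pos ha, hw1], hw2⟩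
      · rw [List.filter_cons_of_neg ha] at h
        obtain ⟨w1, w2, rfl, hw1, hw2⟩ := ih l1 l2 h
        exact ⟨a :: w1, w2, rfl, by rw [List.filter_cons_of_neg ha, hw1], hw2⟩

lemma druns_append [DecidableEq E] (f : X → E → Set X) (obs : E → Bool) (s : E)
    (q : Set (X × Bool)) (u v : List E) :
    druns f obs s q (u ++ v) = druns f obs s (druns f obs s q u) v := List.foldl_append ..

lemma druns_char [DecidableEq E] (f : X → E → Set X) (obs : E → Bool) (s : E) (x0 : X)
    (ω : List E) (p : X × Bool) :
    p ∈ druns f obs s (dinit f obs s x0) ω ↔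
      ∃ w, proj obs w = ω ∧ p.1 ∈ nsteps f {x0} w ∧ p.2 = decide (s ∈ w) := by
  induction ω using List.reverseRecOn generalizing p with
  | nil => exact Iff.rfl
  | append_singleton ω e ih =>
      rw [druns_append]
      constructor
      · rintro ⟨xl, hxl, w2, hw2, hp1, hp2⟩
        obtain ⟨w1, hw1, hx1, hb1⟩ := (ih xl).mp hxl
        refine ⟨w1 ++ w2, ?_, ?_, ?_⟩
        · simp only [proj, List.filter_append] at *
          rw [hw1, hw2]
        · rw [nsteps_append]
          exact nsteps_mono f w2 (by simp [Set.singleton_subset_iff, hx1]) hp1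
        · rw [hp2, hb1]
          simp [List.mem_append, Bool.decide_or]
      · rintro ⟨w, hw, hp1, hp2⟩
        obtain ⟨w1, w2, rfl, hw1, hw2⟩ := filter_split obs w ω [e] hw
        rw [nsteps_append] at hp1
        obtain ⟨x1, hx1, hy⟩ := (mem_nsteps_iff f w2 _ p.1).mp hp1
        refine ⟨(x1, decide (s ∈ w1)), (ih _).mpr ⟨w1, hw1, hx1, rfl⟩, w2, hw2, hy, ?_⟩
        rw [hp2]
        simp [List.mem_append, Bool.decide_or]

lemma druns_prop [DecidableEq E] (f : X → E → Set X) (obs : E → Bool) (s : E) :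
    ∀ (ω : List E) (q : Set (X × Bool)), (∀ p ∈ q, p.2 = true) →
      ∀ p ∈ druns f obs s q ω, p.2 = true := by
  intro ω
  induction ω with
  | nil => intro q hq; exact hq
  | cons a ω ih =>
      intro q hq
      apply ih
      rintro p ⟨xl, hxl, w, hw, hp1, hp2⟩
      rw [hp2, hq xl hxl, Bool.true_or]

theorem revealing_implies_secret_cycle' [DecidableEq E] [Fintype X]
    (f : X → E → Set X) (obs : E → Bool) (s : E) (x0 : X)
    (hlive : ∀ w ∈ lang f x0, ∃ a : E, w ++ [a] ∈ lang f x0)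
    (hnuc : ∃ N : ℕ, ∀ u w : List E, u ++ w ∈ lang f x0 →
      (∀ a ∈ w, obs a = false) → w.length ≤ N)
    (lam : List E) (hlang : lam ∈ lang f x0)
    (hforce : ∀ lam' ∈ lang f x0, proj obs lam' = proj obs lam → s ∈ lam') :
    ∃ u v : List E, v ≠ [] ∧
      (druns f obs s (dinit f obs s x0) u).Nonempty ∧
      druns f obs s (dinit f obs s x0) (u ++ v) = druns f obs s (dinit f obs s x0) u ∧
      (∀ w : List E, w <+: v →
        ∀ p ∈ druns f obs s (dinit f obs s x0) (u ++ w), p.2 = true) := by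
  classical
  obtain ⟨N, hN⟩ := hnuc
  have ext_aux : ∀ n : ℕ, ∀ μ τ : List E, μ ++ τ ∈ lang f x0 → (∀ a ∈ τ, obs a = false) →
      N + 1 ≤ n + τ.length →
      ∃ σ e, μ ++ σ ++ [e] ∈ lang f x0 ∧ (∀ a ∈ σ, obs a = false) ∧ obs e = true := by
    intro n
    induction n with
    | zero =>
        intro μ τ hμτ hτ hlen
        have := hN μ τ hμτ hτ
        omega
    | succ n ih =>
        intro μ τ hμτ hτ hlen
        obtain ⟨a, ha⟩ := hlive _ hμτ
        by_cases hoa : obs a = true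
        · exact ⟨τ, a, ha, hτ, hoa⟩
        · have hμτa : μ ++ (τ ++ [a]) ∈ lang f x0 := by rwa [← List.append_assoc]
          have hτa : ∀ b ∈ τ ++ [a], obs b = false := by
            intro b hb
            rcases List.mem_append.mp hb with h | h
            · exact hτ b h
            · simp only [List.mem_singleton] at h; subst h; simpa using hoa
          exact ih μ (τ ++ [a]) hμτa hτa
            (by simp only [List.length_append, List.length_singleton]; omega)
  have step : ∀ μ, μ ∈ lang f x0 →
      ∃ μ' e, μ' ∈ lang f x0 ∧ proj obs μ' = proj obs μ ++ [e] := by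
    intro μ hμ
    obtain ⟨σ, e, h1, h2, h3⟩ := ext_aux (N + 1) μ [] (by simpa using hμ) (by simp) (by simp)
    refine ⟨μ ++ σ ++ [e], e, h1, ?_⟩
    have hσ : σ.filter obs = [] := List.filter_eq_nil_iff.mpr (by intro a ha; simp [h2 a ha])
    simp [proj, List.filter_append, hσ, h3]
  choose g ge hg hge using step
  let μ : ℕ → {w : List E // w ∈ lang f x0} :=
    fun n => Nat.rec ⟨lam, hlang⟩ (fun _ p => ⟨g p.1 p.2, hg p.1 p.2⟩) n
  have hμ0 : (μ 0).1 = lam := rfl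
  have hμs : ∀ k, proj obs (μ (k + 1)).1 = proj obs (μ k).1 ++ [ge (μ k).1 (μ k).2] :=
    fun k => hge _ _
  have hlen : ∀ k, (proj obs (μ k).1).length = (proj obs lam).length + k := by
    intro k
    induction k with
    | zero => rfl
    | succ k ih =>
        rw [hμs k, List.length_append, ih, List.length_singleton]; omega
  have hpre : ∀ i j, i ≤ j → proj obs (μ i).1 <+: proj obs (μ j).1 := by
    intro i j hij
    obtain ⟨d, rfl⟩ := Nat.exists_eq_add_of_le hij
    clear hij
    induction d with
    | zero => exact List.prefix_refl _
    | succ d ih =>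
        rw [show i + (d + 1) = (i + d) + 1 from rfl, hμs (i + d)]
        exact ih.trans (List.prefix_append _ _)
  obtain ⟨i, j, hij, heq⟩ : ∃ i j : ℕ, i < j ∧
      druns f obs s (dinit f obs s x0) (proj obs (μ i).1)
        = druns f obs s (dinit f obs s x0) (proj obs (μ j).1) := by
    obtain ⟨i, j, hne, heq⟩ := Finite.exists_ne_map_eq_of_infinite
      (fun k : ℕ => druns f obs s (dinit f obs s x0) (proj obs (μ k).1))
    rcases hne.lt_or_gt with h | h
    · exact ⟨i, j, h, heq⟩
    · exact ⟨j, i, h, heq.symm⟩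
  obtain ⟨v, hv⟩ := hpre i j (le_of_lt hij)
  refine ⟨proj obs (μ i).1, v, ?_, ?_, ?_, ?_⟩
  · intro hvnil
    have h1 := hlen i
    have h2 := hlen j
    rw [← hv, hvnil, List.append_nil] at h2
    omega
  · obtain ⟨x, hx⟩ := (μ i).2
    exact ⟨(x, decide (s ∈ (μ i).1)),
      (druns_char f obs s x0 _ _).mpr ⟨(μ i).1, rfl, hx, rfl⟩⟩
  · rw [hv]; exact heq.symm
  · intro w hw p hp
    obtain ⟨τ, hτ⟩ := hpre 0 i (Nat.zero_le i)
    rw [hμ0] at hτ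
    have base : ∀ p ∈ druns f obs s (dinit f obs s x0) (proj obs lam), p.2 = true := by
      intro p hp
      obtain ⟨w', hw', hx', hb⟩ := (druns_char f obs s x0 _ _).mp hp
      have hw'lang : w' ∈ lang f x0 := ⟨p.1, hx'⟩
      have hs' := hforce w' hw'lang hw'
      rw [hb]; simp [hs']
    have hrw : proj obs (μ i).1 ++ w = proj obs lam ++ (τ ++ w) := by
      rw [← hτ, List.append_assoc]
    rw [hrw, druns_append] at hp
    exact druns_prop f obs s (τ ++ w) _ base p hp

/-- an s-revealing sequence forces a secret cycle in the diagnoser. -/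
theorem revealing_implies_secret_cycle [DecidableEq E] [Fintype X]
    (f : X → E → Set X) (obs : E → Bool) (s : E) (x0 : X)
    (hobs : obs s = false)
    (hlive : ∀ w ∈ lang f x0, ∃ a : E, w ++ [a] ∈ lang f x0)
    (hnuc : ∃ N : ℕ, ∀ u w : List E, u ++ w ∈ lang f x0 →
      (∀ a ∈ w, obs a = false) → w.length ≤ N)
    (hrev : ∃ lam : List E, sRevealing f obs s x0 lam) :
    ∃ u v : List E, v ≠ [] ∧
      (druns f obs s (dinit f obs s x0) u).Nonempty ∧
      druns f obs s (dinit f obs s x0) (u ++ v) = druns f obs s (dinit f obs s x0) u ∧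
      (∀ w : List E, w <+: v →
        ∀ p ∈ druns f obs s (dinit f obs s x0) (u ++ w), p.2 = true) := by
  obtain ⟨lam, hlang, _hs, hforce⟩ := hrev
  exact revealing_implies_secret_cycle' f obs s x0 hlive hnuc lam hlang hforce
end

section
/- Secret labels in the diagnoser are absorbing: if a diagnoser state q of G_d is a secret state (all pairs labeled S), then every state reachable from q in G_d is also a secret state. -/
variable {X E : Type}

/-- secret labels are absorbing in the diagnoser. -/
theorem secret_states_absorbing [DecidableEq E] (f : X → E → Set X) (obs : E → Bool)
    (s : E) (q : Set (X × Bool)) (hq : ∀ p ∈ q, p.2 = true) :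
    ∀ ω : List E, ∀ p ∈ druns f obs s q ω, p.2 = true := by
  intro ω
  induction ω generalizing q with
  | nil => exact hq
  | cons e ω ih =>
    intro p hp
    refine ih (dstep f obs s q e) ?_ p hp
    rintro p' ⟨xl, hxl, w, -, -, h2⟩
    rw [h2, hq xl hxl, Bool.true_or]
end
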